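/- If H_S is an invariant subspace for a CPTP map T on a finite-dimensional Hilbert space, then for every n ≥ 0 the support of (T*)^n(Π_S) is contained in the support of (T*)^{n+1}(Π_S). -/

import Mathlib

/-!
Invariance of `H_S = range P` means that every Kraus operator maps `range P` into itself,
i.e. `P Mₖᴴ P = P Mₖᴴ`. Together with `∑ Mₖᴴ Mₖ = 1` this gives `P · T*(P) = P`, hence
`ker T*(P) ⊆ ker P`. For positive semidefinite `A` one has `ker T*(A) = ⋂ₖ Mₖ⁻¹(ker A)`, which is
monotone in `ker A`, so iterating `T*` propagates the inclusion to
`ker (T*)^{n+1}(P) ⊆ ker (T*)^n(P)`; taking orthogonal complements gives the claim.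
-/

open Matrix
open scoped ComplexOrder

/-- The support `(ker X)ᗮ` of an operator. -/
noncomputable def msupp {n : Type*} [Fintype n] [DecidableEq n]
    (X : Matrix n n ℂ) : Submodule ℂ (EuclideanSpace ℂ n) :=
  (LinearMap.ker (Matrix.toEuclideanLin X))ᗮ

namespace Matrix

section KrausDual

variable {𝕜 ι n : Type*} [RCLike 𝕜] [Fintype ι] [Fintype n]

def krausDual (M : ι → Matrix n n 𝕜) (A : Matrix n n 𝕜) : Matrix n n 𝕜 :=
  ∑ k, (M k)ᴴ * A * M k

variable {M : ι → Matrix n n 𝕜} {A B P : Matrix n n 𝕜}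

open LinearMap (ker)

lemma PosSemidef.krausDual (hA : A.PosSemidef) : (Matrix.krausDual M A).PosSemidef :=
  posSemidef_sum _ fun k _ => hA.conjTranspose_mul_mul_same (M k)

lemma PosSemidef.krausDual_iterate (hA : A.PosSemidef) (m : ℕ) :
    ((Matrix.krausDual M)^[m] A).PosSemidef := by
  induction m with
  | zero => exact hA
  | succ m ih => rw [Function.iterate_succ_apply']; exact ih.krausDual

lemma PosSemidef.krausDual_mulVec_eq_zero_iff (hA : A.PosSemidef) (v : n → 𝕜) :
    Matrix.krausDual M A *ᵥ v = 0 ↔ ∀ k, A *ᵥ (M k *ᵥ v) = 0 := by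
  have hterm : ∀ k, star v ⬝ᵥ ((M k)ᴴ * A * M k) *ᵥ v = star (M k *ᵥ v) ⬝ᵥ A *ᵥ (M k *ᵥ v) :=
    fun k => by rw [star_mulVec, ← mulVec_mulVec, ← mulVec_mulVec, dotProduct_mulVec]
  rw [← hA.krausDual.dotProduct_mulVec_zero_iff, Matrix.krausDual, sum_mulVec, dotProduct_sum,
    Finset.sum_congr rfl fun k _ => hterm k,
    Finset.sum_eq_zero_iff_of_nonneg fun k _ => hA.dotProduct_mulVec_nonneg _]
  simp only [Finset.mem_univ, true_implies, hA.dotProduct_mulVec_zero_iff]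

lemma ker_krausDual_le_ker_krausDual (hA : A.PosSemidef) (hB : B.PosSemidef)
    (h : ker B.mulVecLin ≤ ker A.mulVecLin) :
    ker (krausDual M B).mulVecLin ≤ ker (krausDual M A).mulVecLin := by
  intro v hv
  simp only [LinearMap.mem_ker, mulVecLin_apply, hA.krausDual_mulVec_eq_zero_iff,
    hB.krausDual_mulVec_eq_zero_iff] at hv ⊢
  exact fun k => h (hv k)

lemma ker_krausDual_iterate_le (hA : A.PosSemidef) (hB : B.PosSemidef)
    (h : ker B.mulVecLin ≤ ker A.mulVecLin) (m : ℕ) :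
    ker ((krausDual M)^[m] B).mulVecLin ≤ ker ((krausDual M)^[m] A).mulVecLin := by
  induction m with
  | zero => exact h
  | succ m ih =>
    simp only [Function.iterate_succ_apply']
    exact ker_krausDual_le_ker_krausDual (hA.krausDual_iterate m) (hB.krausDual_iterate m) ih

lemma mul_conjTranspose_mul_eq_of_ker_le (hP : P.PosSemidef) (hProj : P * P = P)
    (h : ker P.mulVecLin ≤ ker (krausDual (fun k => (M k)ᴴ) P).mulVecLin) (k : ι) :
    P * (M k)ᴴ * P = P * (M k)ᴴ := by
  rw [ext_iff_mulVec]
  intro w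
  have hw : w - P *ᵥ w ∈ ker P.mulVecLin := by
    simp [mulVec_sub, mulVec_mulVec, hProj]
  have := (hP.krausDual_mulVec_eq_zero_iff _).mp (h hw) k
  rw [mulVec_sub, mulVec_sub, sub_eq_zero] at this
  simp only [← mulVec_mulVec, this]

lemma mul_krausDual_self_eq [DecidableEq n] (hTP : ∑ k, (M k)ᴴ * M k = 1)
    (hcompress : ∀ k, P * (M k)ᴴ * P = P * (M k)ᴴ) : P * krausDual M P = P := by
  calc P * krausDual M P = ∑ k, P * (M k)ᴴ * P * M k := by
        simp only [krausDual, Finset.mul_sum, mul_assoc]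
    _ = P * ∑ k, (M k)ᴴ * M k := by
        simp only [hcompress, Finset.mul_sum, mul_assoc]
    _ = P := by rw [hTP, mul_one]

lemma ker_krausDual_self_le (h : P * krausDual M P = P) :
    ker (krausDual M P).mulVecLin ≤ ker P.mulVecLin := by
  intro v hv
  rw [LinearMap.mem_ker, mulVecLin_apply] at hv ⊢
  rw [← h, ← mulVec_mulVec, hv, mulVec_zero]

end KrausDual

end Matrix

section Support

variable {𝕜 n : Type*} [RCLike 𝕜] [Fintype n] [DecidableEq n]

open LinearMap (ker range)

lemma Matrix.mem_ker_toEuclideanLin_iff {X : Matrix n n 𝕜} {v : EuclideanSpace 𝕜 n} :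
    v ∈ ker X.toEuclideanLin ↔ v.ofLp ∈ ker X.mulVecLin := by
  simp [Matrix.toLpLin_apply]

lemma msupp_le_msupp_iff {X Y : Matrix n n ℂ} :
    msupp X ≤ msupp Y ↔ ker Y.mulVecLin ≤ ker X.mulVecLin := by
  rw [msupp, msupp, Submodule.orthogonal_le_orthogonal_iff]
  refine ⟨fun h v hv => ?_, fun h v hv => ?_⟩
  · exact Matrix.mem_ker_toEuclideanLin_iff.mp (h (Matrix.mem_ker_toEuclideanLin_iff.mpr hv))
  · exact Matrix.mem_ker_toEuclideanLin_iff.mpr (h (Matrix.mem_ker_toEuclideanLin_iff.mp hv))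

lemma Matrix.IsHermitian.msupp_eq_range {P : Matrix n n ℂ} (hP : P.IsHermitian) :
    msupp P = range P.toEuclideanLin := by
  rw [msupp, ← (isSymmetric_toEuclideanLin_iff.mpr hP).orthogonal_range,
    Submodule.orthogonal_orthogonal]

end Support

open LinearMap (ker) in
/-- If `H_S` (given by the orthogonal projection `P`) is invariant for a CPTP map `T`,
then the supports of `(T*)^n(P)` form a nondecreasing sequence of subspaces. -/
theorem stmt_7 {d K : ℕ} (M : Fin K → Matrix (Fin d) (Fin d) ℂ)
    (hTP : ∑ k, (M k)ᴴ * M k = 1)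
    (P : Matrix (Fin d) (Fin d) ℂ) (hProj : P * P = P) (hHerm : Pᴴ = P)
    (Tdual : Matrix (Fin d) (Fin d) ℂ → Matrix (Fin d) (Fin d) ℂ)
    (hTdual : Tdual = fun A => ∑ k, (M k)ᴴ * A * M k)
    (hinv : ∀ ρ : Matrix (Fin d) (Fin d) ℂ, ρ.PosSemidef →
        msupp ρ ≤ LinearMap.range (Matrix.toEuclideanLin P) →
        msupp (∑ k, M k * ρ * (M k)ᴴ) ≤ LinearMap.range (Matrix.toEuclideanLin P)) :
    ∀ n : ℕ, msupp (Tdual^[n] P) ≤ msupp (Tdual^[n + 1] P) := by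
  obtain rfl : Tdual = krausDual M := hTdual
  have hP : P.PosSemidef := by
    simpa only [hHerm, hProj] using posSemidef_conjTranspose_mul_self P
  have hPinv : ker P.mulVecLin ≤ ker (krausDual (fun k => (M k)ᴴ) P).mulVecLin := by
    rw [← msupp_le_msupp_iff, Matrix.IsHermitian.msupp_eq_range hHerm]
    simpa only [krausDual, conjTranspose_conjTranspose] using
      hinv P hP (Matrix.IsHermitian.msupp_eq_range hHerm).le
  have hbase : ker (krausDual M P).mulVecLin ≤ ker P.mulVecLin :=
    ker_krausDual_self_le <| mul_krausDual_self_eq hTP <|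
      mul_conjTranspose_mul_eq_of_ker_le hP hProj hPinv
  intro n
  rw [msupp_le_msupp_iff, Function.iterate_succ_apply]
  exact ker_krausDual_iterate_le hP hP.krausDual hbase n
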